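/- Let G = G₁ × ⋯ × G_m, where G₁,…,G_m are finitely generated groups, each with finitely many conjugacy classes, with generating sets S₁,…,S_m, and equip G with the generating set S = S₁ ⊔ ⋯ ⊔ S_m. (a) If each Gᵢ has an independent signature sequence, then G has an independent signature sequence. (b) If each Gᵢ has an independent signature sequence with a lower triangular independent signature matrix (with respect to some ordering of its conjugacy classes), then so does G. -/

import Mathlib

/-- Words over the alphabet `ι` with prescribed signature `α`: the word `w` has signature `α`
if each letter `i` occurs exactly `α i` times in `w`. -/
def sigSet {ι : Type*} [DecidableEq ι] (α : ι → ℕ) : Set (List ι) :=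
  {w | ∀ i, w.count i = α i}

/-- The signature vector `V_α` of a signature `α`, with respect to a family of group elements
`s : ι → G` and an enumeration `C : Fin r → ConjClasses G` of (some) conjugacy classes: its
`j`-th entry is the number of words of signature `α` whose product lies in the class `C j`. -/
noncomputable def sigVec {ι G : Type*} [DecidableEq ι] [Group G] (s : ι → G) {r : ℕ}
    (C : Fin r → ConjClasses G) (α : ι → ℕ) : Fin r → ℚ :=
  fun j => ((sigSet α ∩ {w | (w.map s).prod ∈ (C j).carrier}).ncard : ℚ)

/-- The group `G`, with generating family `s : ι → G`, has an *independent signature sequence*: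
there are an enumeration `C₁, …, C_r` of all conjugacy classes of `G` and signatures
`α₁, …, α_r` whose signature vectors `V_{α₁}, …, V_{α_r}` are linearly independent. -/
def HasISS {ι G : Type*} [DecidableEq ι] [Group G] (s : ι → G) : Prop :=
  ∃ (r : ℕ) (C : Fin r → ConjClasses G) (α : Fin r → ι → ℕ),
    Function.Bijective C ∧ LinearIndependent ℚ (fun i => sigVec s C (α i))

/-- The group `G`, with generating family `s : ι → G`, has an independent signature sequence
whose independent signature matrix is lower triangular with respect to some ordering of the
conjugacy classes of `G`. -/
def HasISSLT {ι G : Type*} [DecidableEq ι] [Group G] (s : ι → G) : Prop :=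
  ∃ (r : ℕ) (C : Fin r → ConjClasses G) (α : Fin r → ι → ℕ),
    Function.Bijective C ∧ LinearIndependent ℚ (fun i => sigVec s C (α i)) ∧
    ∀ i j : Fin r, i < j → sigVec s C (α i) j = 0

/-! A word over the disjoint union of the generating sets is the same as a shuffle pattern
(the sequence of factors its letters come from) together with one word in each factor. Hence the
signature matrix of `G` for the concatenated signatures and the product conjugacy classes (every
conjugacy class of `G` is a product of classes of the factors) is the Kronecker
product of the signature matrices of the factors, with its rows rescaled by the (positive) numbers
of shuffle patterns. Kronecker products preserve invertibility, and they preserve lower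
triangularity for the lexicographic order. -/

open Function

namespace List

variable {κ : Type*} [DecidableEq κ] {ι : κ → Type*}

theorem length_lookupAll (i : κ) (w : List (Σ j, ι j)) :
    (w.lookupAll i).length = w.keys.count i := by
  induction w with
  | nil => rfl
  | cons p w ih =>
    obtain ⟨j, a⟩ := p
    by_cases h : j = i
    · subst h; simp [lookupAll_cons_eq, keys_cons, ih]
    · rw [lookupAll_cons_ne _ _ (Ne.symm h), keys_cons, count_cons_of_ne h, ih]

theorem count_lookupAll [∀ i, DecidableEq (ι i)] (i : κ) (a : ι i) (w : List (Σ j, ι j)) :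
    (w.lookupAll i).count a = w.count ⟨i, a⟩ := by
  induction w with
  | nil => rfl
  | cons p w ih =>
    obtain ⟨j, b⟩ := p
    by_cases h : j = i
    · subst h; simp [lookupAll_cons_eq, count_cons, ih]
    · rw [lookupAll_cons_ne _ _ (Ne.symm h), count_cons, ih]
      simp [h]

theorem eq_of_keys_eq_of_lookupAll_eq {w w' : List (Σ j, ι j)} (hk : w.keys = w'.keys)
    (hl : ∀ i, w.lookupAll i = w'.lookupAll i) : w = w' := by
  induction w generalizing w' with
  | nil => simpa [keys] using hk.symm
  | cons p w ih =>
    obtain _ | ⟨p', w'⟩ := w'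
    · simp [keys] at hk
    obtain ⟨i, a⟩ := p
    obtain ⟨i', a'⟩ := p'
    simp only [keys_cons, cons.injEq] at hk
    obtain ⟨rfl, hk⟩ := hk
    have hi := hl i
    simp only [lookupAll_cons_eq, cons.injEq] at hi
    obtain ⟨rfl, -⟩ := hi
    refine congrArg _ (ih hk fun j => ?_)
    by_cases h : j = i
    · subst h; simpa [lookupAll_cons_eq] using hl j
    · simpa [lookupAll_cons_ne _ ⟨i, a⟩ h] using hl j

theorem exists_keys_eq_lookupAll_eq (u : List κ) (f : ∀ i, List (ι i))
    (hf : ∀ i, (f i).length = u.count i) :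
    ∃ w : List (Σ j, ι j), w.keys = u ∧ ∀ i, w.lookupAll i = f i := by
  induction u generalizing f with
  | nil =>
    exact ⟨[], rfl, fun i => (List.length_eq_zero_iff.1 (hf i)).symm⟩
  | cons i u ih =>
    obtain ⟨a, t, hfi⟩ : ∃ a t, f i = a :: t :=
      List.exists_cons_of_length_pos (by simp [hf i])
    obtain ⟨w, hwk, hwl⟩ := ih (update f i t) fun j => by
      by_cases h : j = i
      · subst h; simpa [hfi] using hf j
      · simpa [h, count_cons_of_ne (Ne.symm h)] using hf j
    refine ⟨⟨i, a⟩ :: w, by simp [keys_cons, hwk], fun j => ?_⟩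
    by_cases h : j = i
    · subst h; simp [lookupAll_cons_eq, hwl, hfi]
    · simpa [lookupAll_cons_ne _ ⟨i, a⟩ h, h] using hwl j

end List

def sigmaMulSingle {κ : Type*} [DecidableEq κ] {ι G : κ → Type*} [∀ i, One (G i)]
    (s : ∀ i, ι i → G i) (p : Σ i, ι i) : ∀ i, G i :=
  Pi.mulSingle p.1 (s p.1 p.2)

theorem List.prod_map_sigmaMulSingle_apply {κ : Type*} [DecidableEq κ] {ι G : κ → Type*}
    [∀ i, Monoid (G i)] (s : ∀ i, ι i → G i) (w : List (Σ j, ι j)) (i : κ) :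
    (w.map (sigmaMulSingle s)).prod i = ((w.lookupAll i).map (s i)).prod := by
  induction w with
  | nil => simp [lookupAll_nil]
  | cons p w ih =>
    obtain ⟨j, a⟩ := p
    by_cases h : j = i
    · subst h; simp [sigmaMulSingle, lookupAll_cons_eq, ih]
    · simp [sigmaMulSingle, lookupAll_cons_ne _ ⟨j, a⟩ (Ne.symm h), ih,
        Pi.mulSingle_eq_of_ne (Ne.symm h)]

section PiConj

variable {κ : Type*} {G : κ → Type*} [∀ i, Group (G i)]

theorem Pi.isConj_iff {x y : ∀ i, G i} : IsConj x y ↔ ∀ i, IsConj (x i) (y i) := by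
  simp only [_root_.isConj_iff]
  constructor
  · rintro ⟨c, hc⟩ i
    exact ⟨c i, by rw [← hc]; rfl⟩
  · intro h
    choose c hc using h
    exact ⟨c, funext hc⟩

noncomputable def ConjClasses.piEquiv : ConjClasses (∀ i, G i) ≃ ∀ i, ConjClasses (G i) := by
  refine Equiv.ofBijective (fun c i => c.map (Pi.evalMonoidHom G i)) ⟨?_, fun c => ?_⟩
  · intro a b hab
    obtain ⟨x, rfl⟩ := ConjClasses.mk_surjective a
    obtain ⟨y, rfl⟩ := ConjClasses.mk_surjective b
    exact ConjClasses.mk_eq_mk_iff_isConj.2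
      (Pi.isConj_iff.2 fun i => ConjClasses.mk_eq_mk_iff_isConj.1 (congrFun hab i))
  · choose x hx using fun i => ConjClasses.mk_surjective (c i)
    exact ⟨ConjClasses.mk x, funext hx⟩

theorem ConjClasses.mem_carrier_piEquiv_symm {x : ∀ i, G i} {c : ∀ i, ConjClasses (G i)} :
    x ∈ (piEquiv.symm c).carrier ↔ ∀ i, x i ∈ (c i).carrier := by
  simp only [mem_carrier_iff_mk_eq, Equiv.eq_symm_apply, funext_iff]
  rfl

end PiConj

namespace Matrix

variable {κ : Type*} [Fintype κ] {l n : κ → Type*} {R : Type*} [CommSemiring R]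

def piKronecker (M : ∀ i, Matrix (l i) (n i) R) : Matrix (∀ i, l i) (∀ i, n i) R :=
  of fun a b => ∏ i, M i (a i) (b i)

theorem piKronecker_mul [DecidableEq κ] {p : κ → Type*} [∀ i, Fintype (n i)]
    (X : ∀ i, Matrix (l i) (n i) R) (Y : ∀ i, Matrix (n i) (p i) R) :
    piKronecker X * piKronecker Y = piKronecker fun i => X i * Y i := by
  ext a b
  simp only [piKronecker, mul_apply, of_apply, ← Finset.prod_mul_distrib,
    Finset.prod_univ_sum, Fintype.piFinset_univ]

theorem piKronecker_one [∀ i, DecidableEq (n i)] :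
    piKronecker (fun i => (1 : Matrix (n i) (n i) R)) = 1 := by
  ext a b
  by_cases hab : a = b
  · subst hab; simp [piKronecker]
  · obtain ⟨i, hi⟩ := ne_iff.1 hab
    simp only [piKronecker, of_apply, one_apply_ne hab]
    exact Finset.prod_eq_zero (Finset.mem_univ i) (one_apply_ne hi)

def piKroneckerHom [DecidableEq κ] [∀ i, Fintype (n i)] [∀ i, DecidableEq (n i)] :
    (∀ i, Matrix (n i) (n i) R) →* Matrix (∀ i, n i) (∀ i, n i) R where
  toFun := piKronecker
  map_one' := piKronecker_one
  map_mul' X Y := (piKronecker_mul X Y).symm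

theorem isUnit_piKronecker [DecidableEq κ] [∀ i, Fintype (n i)] [∀ i, DecidableEq (n i)]
    {M : ∀ i, Matrix (n i) (n i) R} (hM : ∀ i, IsUnit (M i)) : IsUnit (piKronecker M) :=
  (Pi.isUnit_iff.2 hM).map (piKroneckerHom (R := R))

theorem piKronecker_apply_eq_zero_of_toLex_lt [LT κ] [∀ i, LT (n i)]
    {M : ∀ i, Matrix (n i) (n i) R} (hM : ∀ i a b, a < b → M i a b = 0) {a b : ∀ i, n i}
    (hab : toLex a < toLex b) : piKronecker M a b = 0 := by
  obtain ⟨i, -, hi⟩ := hab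
  exact Finset.prod_eq_zero (Finset.mem_univ i) (hM i _ _ hi)

end Matrix

theorem Set.ncard_univ_pi {κ : Type*} [Fintype κ] {β : κ → Type*} (B : ∀ i, Set (β i)) :
    (Set.univ.pi B).ncard = ∏ i, (B i).ncard := by
  simp only [← Nat.card_coe_set_eq, Nat.card_congr (Equiv.Set.univPi B), Nat.card_pi]

section Signatures

variable {ι : Type*} [DecidableEq ι]

theorem length_eq_sum_of_mem_sigSet [Fintype ι] {α : ι → ℕ} {w : List ι}
    (hw : w ∈ sigSet α) : w.length = ∑ i, α i := by
  rw [← Multiset.coe_card, ← Multiset.sum_count_eq_card (s := Finset.univ) (by simp)]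
  exact Finset.sum_congr rfl fun i _ => (Multiset.coe_count i w).trans (hw i)

theorem sigSet_finite [Fintype ι] (α : ι → ℕ) : (sigSet α).Finite :=
  (List.finite_length_eq ι (∑ i, α i)).subset fun _ => length_eq_sum_of_mem_sigSet

theorem sigSet_nonempty [Fintype ι] (α : ι → ℕ) : (sigSet α).Nonempty := by
  refine ⟨(∑ i, α i • {i} : Multiset ι).toList, fun i => ?_⟩
  rw [← Multiset.coe_count, Multiset.coe_toList, Multiset.count_sum']
  simp [Multiset.count_singleton]

variable {G : Type*} [Group G]

noncomputable def sigCount (s : ι → G) (α : ι → ℕ) (c : ConjClasses G) : ℕ :=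
  (sigSet α ∩ {w | (w.map s).prod ∈ c.carrier}).ncard

/-- Its rows are the signature vectors `sigVec s C (α k)`; for `K = Fin r` it is the ISM. -/
noncomputable def sigMatrix {K : Type*} (s : ι → G) (C : K → ConjClasses G) (α : K → ι → ℕ) :
    Matrix K K ℚ :=
  Matrix.of fun k k' => sigCount s (α k) (C k')

variable {s : ι → G}

theorem sigMatrix_comp {K L : Type*} (C : K → ConjClasses G) (α : K → ι → ℕ) (e : L → K) :
    sigMatrix s (C ∘ e) (α ∘ e) = (sigMatrix s C α).submatrix e e :=
  rfl

theorem HasISS.exists_isUnit_sigMatrix (h : HasISS s) :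
    ∃ (r : ℕ) (C : Fin r → ConjClasses G) (α : Fin r → ι → ℕ),
      Bijective C ∧ IsUnit (sigMatrix s C α) := by
  obtain ⟨r, C, α, hC, hα⟩ := h
  exact ⟨r, C, α, hC, Matrix.linearIndependent_rows_iff_isUnit.1 hα⟩

theorem HasISSLT.exists_isUnit_sigMatrix (h : HasISSLT s) :
    ∃ (r : ℕ) (C : Fin r → ConjClasses G) (α : Fin r → ι → ℕ), Bijective C ∧
      IsUnit (sigMatrix s C α) ∧ ∀ k k', k < k' → sigMatrix s C α k k' = 0 := by
  obtain ⟨r, C, α, hC, hα, hlt⟩ := h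
  exact ⟨r, C, α, hC, Matrix.linearIndependent_rows_iff_isUnit.1 hα, hlt⟩

theorem hasISS_of_isUnit_sigMatrix {K : Type*} [Fintype K] [DecidableEq K]
    {C : K → ConjClasses G} {α : K → ι → ℕ} (hC : Bijective C)
    (hM : IsUnit (sigMatrix s C α)) : HasISS s := by
  let e := (Fintype.equivFin K).symm
  refine ⟨_, C ∘ e, α ∘ e, hC.comp e.bijective,
    (Matrix.linearIndependent_rows_iff_isUnit (A := sigMatrix s (C ∘ e) (α ∘ e))).2 ?_⟩
  rwa [sigMatrix_comp, Matrix.isUnit_submatrix_equiv]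

theorem hasISSLT_of_isUnit_sigMatrix {K : Type*} [Fintype K] [DecidableEq K] {r : ℕ}
    {C : K → ConjClasses G} {α : K → ι → ℕ} (e : Fin r ≃ K) (hC : Bijective C)
    (hM : IsUnit (sigMatrix s C α)) (hlt : ∀ a b, a < b → sigMatrix s C α (e a) (e b) = 0) :
    HasISSLT s := by
  refine ⟨r, C ∘ e, α ∘ e, hC.comp e.bijective,
    (Matrix.linearIndependent_rows_iff_isUnit (A := sigMatrix s (C ∘ e) (α ∘ e))).2 ?_, hlt⟩
  rwa [sigMatrix_comp, Matrix.isUnit_submatrix_equiv]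

end Signatures

section Product

variable {κ : Type*} [DecidableEq κ] [Fintype κ] {ι : κ → Type*} [∀ i, DecidableEq (ι i)]
  [∀ i, Fintype (ι i)] {G : κ → Type*} [∀ i, Group (G i)] (s : ∀ i, ι i → G i)

theorem sigCount_sigmaMulSingle (α : ∀ i, ι i → ℕ) (c : ∀ i, ConjClasses (G i)) :
    sigCount (sigmaMulSingle s) (fun p => α p.1 p.2) (ConjClasses.piEquiv.symm c) =
      (sigSet fun i => ∑ a, α i a).ncard * ∏ i, sigCount (s i) (α i) (c i) := by
  set A := sigSet (fun p : Σ i, ι i => α p.1 p.2) ∩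
    {w | (w.map (sigmaMulSingle s)).prod ∈ (ConjClasses.piEquiv.symm c).carrier}
  set B := fun i => sigSet (α i) ∩ {w | (w.map (s i)).prod ∈ (c i).carrier}
  let split (w : List (Σ i, ι i)) : List κ × ∀ i, List (ι i) := (w.keys, fun i => w.lookupAll i)
  have split_injective : Injective split := fun w w' h =>
    List.eq_of_keys_eq_of_lookupAll_eq (congrArg Prod.fst h) (congrFun (congrArg Prod.snd h))
  have mem_A : ∀ w, w ∈ A ↔ ∀ i, w.lookupAll i ∈ B i := by
    intro w
    simp only [A, B, sigSet, Set.mem_inter_iff, Set.mem_ofPred_eq, Sigma.forall,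
      List.prod_map_sigmaMulSingle_apply, ConjClasses.mem_carrier_piEquiv_symm,
      List.count_lookupAll, ← forall_and]
  have image_split : split '' A = sigSet (fun i => ∑ a, α i a) ×ˢ Set.univ.pi B := by
    ext ⟨u, f⟩
    constructor
    · rintro ⟨w, hw, hwuf⟩
      obtain ⟨rfl, rfl⟩ := Prod.ext_iff.1 hwuf
      refine ⟨fun i => ?_, fun i _ => (mem_A w).1 hw i⟩
      rw [← List.length_lookupAll, length_eq_sum_of_mem_sigSet ((mem_A w).1 hw i).1]
    · rintro ⟨hu, hf⟩
      obtain ⟨w, hwu, hwf⟩ := List.exists_keys_eq_lookupAll_eq u f fun i => by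
        rw [length_eq_sum_of_mem_sigSet (hf i trivial).1, hu i]
      exact ⟨w, (mem_A w).2 fun i => hwf i ▸ hf i trivial, Prod.ext hwu (funext hwf)⟩
  calc A.ncard = (split '' A).ncard := (Set.ncard_image_of_injective A split_injective).symm
    _ = _ := by rw [image_split, Set.ncard_prod, Set.ncard_univ_pi]; rfl

variable {K : κ → Type*} [∀ i, Fintype (K i)] [∀ i, DecidableEq (K i)]
  (C : ∀ i, K i → ConjClasses (G i)) (α : ∀ i, K i → ι i → ℕ)

theorem sigMatrix_sigmaMulSingle :
    sigMatrix (sigmaMulSingle s) (fun k => ConjClasses.piEquiv.symm fun i => C i (k i))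
        (fun k p => α p.1 (k p.1) p.2) =
      Matrix.diagonal (fun k => ((sigSet fun i => ∑ a, α i (k i) a).ncard : ℚ)) *
        Matrix.piKronecker fun i => sigMatrix (s i) (C i) (α i) := by
  ext k k'
  simp only [Matrix.diagonal_mul, sigMatrix, Matrix.piKronecker, Matrix.of_apply,
    sigCount_sigmaMulSingle s (fun i => α i (k i)) (fun i => C i (k' i))]
  push_cast
  rfl

theorem isUnit_sigMatrix_sigmaMulSingle (hM : ∀ i, IsUnit (sigMatrix (s i) (C i) (α i))) :
    IsUnit (sigMatrix (sigmaMulSingle s)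
      (fun k : ∀ i, K i => ConjClasses.piEquiv.symm fun i => C i (k i))
      (fun k p => α p.1 (k p.1) p.2)) := by
  rw [sigMatrix_sigmaMulSingle]
  refine IsUnit.mul (Matrix.isUnit_diagonal.2 (Pi.isUnit_iff.2 fun k => ?_))
    (Matrix.isUnit_piKronecker hM)
  exact isUnit_iff_ne_zero.2 (Nat.cast_ne_zero.2
    (Set.ncard_pos (sigSet_finite _) |>.2 (sigSet_nonempty _)).ne')

theorem sigMatrix_sigmaMulSingle_eq_zero_of_toLex_lt [LT κ] [∀ i, LT (K i)]
    (hlt : ∀ i a b, a < b → sigMatrix (s i) (C i) (α i) a b = 0) {k k' : ∀ i, K i}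
    (h : toLex k < toLex k') :
    sigMatrix (sigmaMulSingle s) (fun k => ConjClasses.piEquiv.symm fun i => C i (k i))
      (fun k p => α p.1 (k p.1) p.2) k k' = 0 := by
  rw [sigMatrix_sigmaMulSingle, Matrix.diagonal_mul,
    Matrix.piKronecker_apply_eq_zero_of_toLex_lt hlt h, mul_zero]

theorem hasISS_sigmaMulSingle (h : ∀ i, HasISS (s i)) : HasISS (sigmaMulSingle s) := by
  choose r C α hC hM using fun i => (h i).exists_isUnit_sigMatrix
  exact hasISS_of_isUnit_sigMatrix
    (ConjClasses.piEquiv.symm.bijective.comp (Bijective.piMap hC))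
    (isUnit_sigMatrix_sigmaMulSingle s C α hM)

theorem hasISSLT_sigmaMulSingle [LinearOrder κ] [WellFoundedLT κ] (h : ∀ i, HasISSLT (s i)) :
    HasISSLT (sigmaMulSingle s) := by
  choose r C α hC hM hlt using fun i => (h i).exists_isUnit_sigMatrix
  let e := monoEquivOfFin (Lex (∀ i, Fin (r i))) rfl
  exact hasISSLT_of_isUnit_sigMatrix (e.toEquiv.trans ofLex)
    (ConjClasses.piEquiv.symm.bijective.comp (Bijective.piMap hC))
    (isUnit_sigMatrix_sigmaMulSingle s C α hM)
    fun a b hab => sigMatrix_sigmaMulSingle_eq_zero_of_toLex_lt s C α hlt (e.lt_iff_lt.2 hab)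

end Product

theorem hasISS_pi_and_hasISSLT_pi_general {m : ℕ} {G : Fin m → Type} [∀ i, Group (G i)]
    {ι : Fin m → Type} [∀ i, Fintype (ι i)] [∀ i, DecidableEq (ι i)]
    (s : ∀ i, ι i → G i) :
    ((∀ i, HasISS (s i)) →
      HasISS (fun p : Σ i, ι i => (Pi.mulSingle p.1 (s p.1 p.2) : ∀ i, G i))) ∧
    ((∀ i, HasISSLT (s i)) →
      HasISSLT (fun p : Σ i, ι i => (Pi.mulSingle p.1 (s p.1 p.2) : ∀ i, G i))) :=
  ⟨hasISS_sigmaMulSingle s, hasISSLT_sigmaMulSingle s⟩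

/-- Let `G = G₁ × ⋯ × G_m` with each `Gᵢ` a finitely generated group having finitely many
conjugacy classes, with generating family `s i : ι i → G i`, and equip `G` with the generating
family indexed by `Σ i, ι i` (the generator `(i, a)` being `s i a` placed in the `i`-th
coordinate).  (a) If each `Gᵢ` has an independent signature sequence, so does `G`.
(b) If each `Gᵢ` has an independent signature sequence with lower triangular independent
signature matrix, so does `G`. -/
theorem hasISS_pi_and_hasISSLT_pi {m : ℕ} {G : Fin m → Type} [∀ i, Group (G i)]
    {ι : Fin m → Type} [∀ i, Fintype (ι i)] [∀ i, DecidableEq (ι i)]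
    (s : ∀ i, ι i → G i)
    (hgen : ∀ i, Subgroup.closure (Set.range (s i)) = ⊤)
    [∀ i, Finite (ConjClasses (G i))] :
    ((∀ i, HasISS (s i)) →
      HasISS (fun p : Σ i, ι i => (Pi.mulSingle p.1 (s p.1 p.2) : ∀ i, G i))) ∧
    ((∀ i, HasISSLT (s i)) →
      HasISSLT (fun p : Σ i, ι i => (Pi.mulSingle p.1 (s p.1 p.2) : ∀ i, G i))) :=
  hasISS_pi_and_hasISSLT_pi_general s
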